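/- Let π be the semi-discrete transport map induced by a power diagram: π(x) = y_j for x ∈ V_j, with cells V_j = { x : ‖x − y_j‖² − r_j² ≤ ‖x − y_i‖² − r_i² ∀i }. Then for any other map σ : R^n → {y_1,...,y_k} that pushes μ to the same discrete measure ν (i.e., μ(σ⁻¹(y_j)) = μ(V_j) for all j), the transport cost satisfies ∫ ‖x − π(x)‖² dμ(x) ≤ ∫ ‖x − σ(x)‖² dμ(x). -/
import Mathlib

lemma fiber_sum {N k : ℕ} (μ : Fin N → ℝ) (r : Fin k → ℝ) (τ : Fin N → Fin k) :
    ∑ i, μ i * r (τ i) ^ 2 =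
      ∑ j, (∑ i ∈ Finset.univ.filter fun i => τ i = j, μ i) * r j ^ 2 := by
  rw [← Finset.sum_fiberwise (g := τ) (f := fun i => μ i * r (τ i) ^ 2)]
  refine Finset.sum_congr rfl fun j _ => ?_
  rw [Finset.sum_mul]
  refine Finset.sum_congr rfl fun i hi => ?_
  rw [(Finset.mem_filter.mp hi).2]

/-- Optimality of power-diagram assignments for semi-discrete quadratic transport:
among all assignments with the same cluster masses, the power-diagram assignment
(each atom sent to a power-nearest site) minimizes the transport cost. -/
theorem stmt_17 {n N k : ℕ} (x : Fin N → EuclideanSpace ℝ (Fin n))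
    (μ : Fin N → ℝ) (hμ : ∀ i, 0 ≤ μ i)
    (y : Fin k → EuclideanSpace ℝ (Fin n)) (hy : Function.Injective y)
    (r : Fin k → ℝ)
    (π : Fin N → Fin k)
    (hπ : ∀ (i : Fin N) (j : Fin k),
      ‖x i - y (π i)‖ ^ 2 - r (π i) ^ 2 ≤ ‖x i - y j‖ ^ 2 - r j ^ 2)
    (σ : Fin N → Fin k)
    (hmass : ∀ j : Fin k,
      ∑ i ∈ Finset.univ.filter fun i => σ i = j, μ i =
        ∑ i ∈ Finset.univ.filter fun i => π i = j, μ i) :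
    ∑ i, μ i * ‖x i - y (π i)‖ ^ 2 ≤ ∑ i, μ i * ‖x i - y (σ i)‖ ^ 2 := by
  have h1 : ∑ i, μ i * (‖x i - y (π i)‖ ^ 2 - r (π i) ^ 2) ≤
      ∑ i, μ i * (‖x i - y (σ i)‖ ^ 2 - r (σ i) ^ 2) :=
    Finset.sum_le_sum fun i _ => mul_le_mul_of_nonneg_left (hπ i (σ i)) (hμ i)
  have h2 : ∑ i, μ i * r (π i) ^ 2 = ∑ i, μ i * r (σ i) ^ 2 := by
    rw [fiber_sum μ r π, fiber_sum μ r σ]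
    exact Finset.sum_congr rfl fun j _ => by rw [hmass j]
  simp only [mul_sub, Finset.sum_sub_distrib] at h1
  linarith
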